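/- Let Q be the quiver with two vertices 0, 1, arrows x0, x1 from 0 to 1 and arrows y0, ..., y_{k-1} from 1 to 0 (k ≥ 2), and let I be the two-sided ideal of the path algebra kQ generated by x1 y_{j-1} - x0 y_j and y_j x0 - y_{j-1} x1 for 1 ≤ j ≤ k-1. Then the reduction system R = {(x1 y_{j-1}, x0 y_j), (y_j x0, y_{j-1} x1) : 0 < j ≤ k-1} satisfies the diamond condition for I: every path in kQ is reduction finite and reduction unique with respect to R, and I equals the ideal generated by {s - φ_s : (s,φ_s) ∈ R}. -/
import Mathlib


/-!
STATEMENT 4: For the quiver Q with two vertices 0, 1, arrows x0, x1 : 0 → 1 and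
y0, ..., y_{K-1} : 1 → 0 (K ≥ 2) and the ideal I of kQ generated by
x1 y_{j-1} - x0 y_j and y_j x0 - y_{j-1} x1 (1 ≤ j ≤ K-1), the reduction system
R = {(x1 y_{j-1}, x0 y_j), (y_j x0, y_{j-1} x1) : 0 < j ≤ K-1} satisfies the
diamond condition (⋄) for I: every path of Q is reduction finite and reduction
unique with respect to R, and I equals the two-sided ideal generated by
{s - φ_s : (s, φ_s) ∈ R}.

Paths are composed diagrammatically: a word [a, b, ...] is a path when the target
of each arrow equals the source of the next.
-/

/-- The arrows of the quiver. -/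
inductive Ar (K : ℕ) : Type
  | x : Fin 2 → Ar K
  | y : Fin K → Ar K

def arSrc {K : ℕ} : Ar K → Fin 2
  | .x _ => 0
  | .y _ => 1

def arTgt {K : ℕ} : Ar K → Fin 2
  | .x _ => 1
  | .y _ => 0

/-- A word of arrows is a path when consecutive arrows are composable. -/
def IsPath {K : ℕ} (w : List (Ar K)) : Prop :=
  List.Chain' (fun a b => arTgt a = arSrc b) w

variable (K : ℕ)

/-- The reduction system R = {(x1 y_{j-1}, x0 y_j), (y_j x0, y_{j-1} x1)}. -/
def redSys : Set (List (Ar K) × List (Ar K)) :=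
  {p | ∃ (i : ℕ) (h : i + 1 < K),
    p = ([Ar.x 1, Ar.y ⟨i, by omega⟩], [Ar.x 0, Ar.y ⟨i + 1, h⟩]) ∨
    p = ([Ar.y ⟨i + 1, h⟩, Ar.x 0], [Ar.y ⟨i, by omega⟩, Ar.x 1])}

/-- One reduction step: replace a subword s (a left-hand side of R) by φ_s. -/
def WStep (w v : List (Ar K)) : Prop :=
  ∃ a s b t, (s, t) ∈ redSys K ∧ w = a ++ s ++ b ∧ v = a ++ t ++ b

def WNormal (w : List (Ar K)) : Prop := ∀ v, ¬ WStep K w v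

variable (k : Type*) [Field k]

/-- Monomial of the free algebra on the arrows associated to a word. -/
noncomputable def mono (w : List (Ar K)) : FreeAlgebra k (Ar K) :=
  (w.map (FreeAlgebra.ι k)).prod

/- auxiliary -/
def arVal {K : ℕ} : Ar K → ℕ
  | .x j => j
  | .y i => i

def wwt {K : ℕ} : List (Ar K) → ℕ
  | [] => 0
  | a :: l => (l.length + 1) * arVal a + wwt l

lemma wwt_append {K : ℕ} (u v : List (Ar K)) :
    wwt (u ++ v) = wwt u + v.length * (u.map arVal).sum + wwt v := by
  induction u with
  | nil => simp [wwt]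
  | cons a u ih => simp only [List.cons_append, wwt, List.length_append, List.append_eq, ih, List.map_cons,
      List.sum_cons]; ring

lemma wt_step {K : ℕ} {w v : List (Ar K)} (h : WStep K w v) : wwt v < wwt w := by
  obtain ⟨a, s, b, t, hst, rfl, rfl⟩ := h
  obtain ⟨i, hi, h | h⟩ := hst <;>
    (simp only [Prod.mk.injEq] at h; obtain ⟨rfl, rfl⟩ := h) <;>
    simp [wwt_append, wwt, arVal] <;> ring_nf <;> omega

lemma rule_shape {K : ℕ} {s t : List (Ar K)} (h : (s, t) ∈ redSys K) :
    ∃ p q, s = [p, q] := by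
  obtain ⟨i, hi, h | h⟩ := h <;> (simp only [Prod.mk.injEq] at h; obtain ⟨rfl, rfl⟩ := h) <;>
    exact ⟨_, _, rfl⟩

lemma x_ne_y {K : ℕ} (j : Fin 2) (i : Fin K) : Ar.x j ≠ Ar.y i := by rintro ⟨⟩

lemma y_ne_x {K : ℕ} (i : Fin K) (j : Fin 2) : Ar.y i ≠ Ar.x j := by rintro ⟨⟩

lemma x0_ne_x1 {K : ℕ} : (Ar.x 0 : Ar K) ≠ Ar.x 1 := by
  intro h
  injection h with h2
  exact absurd h2 (by decide)

lemma x1_ne_x0 {K : ℕ} : (Ar.x 1 : Ar K) ≠ Ar.x 0 := fun h => x0_ne_x1 h.symm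

lemma rule_det {K : ℕ} {s t t' : List (Ar K)} (h : (s, t) ∈ redSys K)
    (h' : (s, t') ∈ redSys K) : t = t' := by
  obtain ⟨i, hi, h | h⟩ := h <;> (simp only [Prod.mk.injEq] at h; obtain ⟨rfl, rfl⟩ := h) <;>
      obtain ⟨i', hi', h' | h'⟩ := h' <;>
      simp only [Prod.mk.injEq, List.cons.injEq, Ar.y.injEq, Fin.mk.injEq,
        x_ne_y, y_ne_x, x0_ne_x1, x1_ne_x0, and_true, true_and, false_and, and_false,
        eq_self_iff_true] at h'
  · obtain ⟨hii, rfl⟩ := h'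
    subst hii
    rfl
  · obtain ⟨hii, rfl⟩ := h'
    have h2 : i = i' := by omega
    subst h2
    rfl

lemma overlap_case {K : ℕ} (a b' : List (Ar K)) {p q r : Ar K} {t t' : List (Ar K)}
    (hs : (([p, q] : List (Ar K)), t) ∈ redSys K)
    (hs' : (([q, r] : List (Ar K)), t') ∈ redSys K) :
    ∃ d, WStep K (a ++ t ++ (r :: b')) d ∧ WStep K ((a ++ [p]) ++ t' ++ b') d := by
  obtain ⟨i, hi, h | h⟩ := hs <;>
    (simp only [Prod.mk.injEq, List.cons.injEq, and_true] at h
     obtain ⟨⟨rfl, rfl⟩, rfl⟩ := h) <;>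
    obtain ⟨i', hi', h' | h'⟩ := hs' <;>
    simp only [Prod.mk.injEq, List.cons.injEq, Ar.y.injEq, Fin.mk.injEq,
      x_ne_y, y_ne_x, x0_ne_x1, x1_ne_x0, and_true, true_and, false_and, and_false,
      eq_self_iff_true] at h'
  -- only remaining case: s = [x1, y i], s' = [y (i'+1), x0], i = i' + 1
  obtain ⟨⟨hii, rfl⟩, rfl⟩ := h'
  subst hii
  refine ⟨a ++ [Ar.x 0, Ar.y ⟨i' + 1, by omega⟩, Ar.x 1] ++ b', ?_, ?_⟩
  · exact ⟨a ++ [Ar.x 0], [Ar.y ⟨i' + 1 + 1, by omega⟩, Ar.x 0], b',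
      [Ar.y ⟨i' + 1, by omega⟩, Ar.x 1], ⟨i' + 1, by omega, Or.inr rfl⟩,
      by simp, by simp⟩
  · exact ⟨a, [Ar.x 1, Ar.y ⟨i', by omega⟩], Ar.x 1 :: b', [Ar.x 0, Ar.y ⟨i' + 1, by omega⟩],
      ⟨i', by omega, Or.inl rfl⟩, by simp, by simp⟩

lemma loc_aux {K : ℕ} {a s b a' s' b' t t' : List (Ar K)}
    (hs : (s, t) ∈ redSys K) (hs' : (s', t') ∈ redSys K)
    (he : a ++ s ++ b = a' ++ s' ++ b') (hl : a.length ≤ a'.length) :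
    a ++ t ++ b = a' ++ t' ++ b' ∨
      ∃ d, WStep K (a ++ t ++ b) d ∧ WStep K (a' ++ t' ++ b') d := by
  obtain ⟨p, q, rfl⟩ := rule_shape hs
  obtain ⟨p', q', rfl⟩ := rule_shape hs'
  have he' : a ++ ([p, q] ++ b) = a' ++ ([p', q'] ++ b') := by
    simpa [List.append_assoc] using he
  have hcase : ∃ c, a' = a ++ c ∧ [p, q] ++ b = c ++ ([p', q'] ++ b') := by
    rcases List.append_eq_append_iff.mp he' with ⟨c, hc1, hc2⟩ | ⟨c, hc1, hc2⟩
    · exact ⟨c, hc1, hc2⟩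
    · have hcnil : c = [] := by
        have := congrArg List.length hc1
        simp at this
        exact List.eq_nil_of_length_eq_zero (by omega)
      subst hcnil
      simp only [List.append_nil] at hc1
      exact ⟨[], by simp [hc1], by simp [hc1, hc2]⟩
  obtain ⟨c, rfl, hc⟩ := hcase
  match c, hc with
  | [], hc =>
    simp only [List.nil_append, List.cons_append, List.cons.injEq] at hc
    obtain ⟨rfl, rfl, rfl⟩ := hc
    rw [rule_det hs hs']
    exact Or.inl (by simp)
  | [u], hc =>
    simp only [List.cons_append, List.nil_append, List.cons.injEq] at hc
    obtain ⟨rfl, rfl, rfl⟩ := hc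
    exact Or.inr (overlap_case a b' hs hs')
  | u :: u' :: c'', hc =>
    simp only [List.cons_append, List.nil_append, List.cons.injEq] at hc
    obtain ⟨rfl, rfl, rfl⟩ := hc
    refine Or.inr ⟨(a ++ t ++ c'') ++ t' ++ b', ?_, ?_⟩
    · exact ⟨a ++ t ++ c'', [p', q'], b', t', hs', by simp, rfl⟩
    · exact ⟨a, [p, q], c'' ++ t' ++ b', t, hs, by simp, by simp⟩

lemma loc {K : ℕ} {w v1 v2 : List (Ar K)} (h1 : WStep K w v1) (h2 : WStep K w v2) :
    v1 = v2 ∨ ∃ d, WStep K v1 d ∧ WStep K v2 d := by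
  obtain ⟨a, s, b, t, hst, rfl, rfl⟩ := h1
  obtain ⟨a', s', b', t', hst', heq, rfl⟩ := h2
  rcases le_total a.length a'.length with hl | hl
  · exact loc_aux hst hst' heq hl
  · rcases loc_aux hst' hst heq.symm hl with h | ⟨d, hd1, hd2⟩
    · exact Or.inl h.symm
    · exact Or.inr ⟨d, hd2, hd1⟩

lemma normal_stuck {K : ℕ} {v d : List (Ar K)} (hn : WNormal K v)
    (h : Relation.ReflTransGen (WStep K) v d) : v = d := by
  rcases h.cases_head with rfl | ⟨c, hc, -⟩
  · rfl
  · exact absurd hc (hn c)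

theorem quiver_reduction_system_diamond (hK : 2 ≤ K) :
    -- every path is reduction finite:
    (∀ w : List (Ar K), IsPath w → Acc (fun v u => WStep K u v) w) ∧
    -- every path is reduction unique:
    (∀ w v v' : List (Ar K), IsPath w →
      Relation.ReflTransGen (WStep K) w v → Relation.ReflTransGen (WStep K) w v' →
      WNormal K v → WNormal K v' → v = v') ∧
    -- I is the two-sided ideal generated by {s - φ_s : (s, φ_s) ∈ R}:
    TwoSidedIdeal.span {z : FreeAlgebra k (Ar K) | ∃ (i : ℕ) (h : i + 1 < K),
        z = mono K k [Ar.x 1, Ar.y ⟨i, by omega⟩] - mono K k [Ar.x 0, Ar.y ⟨i + 1, h⟩] ∨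
        z = mono K k [Ar.y ⟨i + 1, h⟩, Ar.x 0] - mono K k [Ar.y ⟨i, by omega⟩, Ar.x 1]} =
      TwoSidedIdeal.span {z : FreeAlgebra k (Ar K) |
        ∃ p ∈ redSys K, z = mono K k p.1 - mono K k p.2} := by
  refine ⟨?_, ?_, ?_⟩
  · intro w _
    exact (Subrelation.wf (fun {v u} h => wt_step h)
      (InvImage.wf wwt Nat.lt_wfRel.wf)).apply w
  · intro w v v' _ hv hv' hn hn'
    have hcr : ∀ a b c : List (Ar K), WStep K a b → WStep K a c →
        ∃ d, Relation.ReflGen (WStep K) b d ∧ Relation.ReflTransGen (WStep K) c d := by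
      intro a b c h1 h2
      rcases loc h1 h2 with rfl | ⟨d, hd1, hd2⟩
      · exact ⟨b, .refl, .refl⟩
      · exact ⟨d, .single hd1, .single hd2⟩
    obtain ⟨d, hd1, hd2⟩ := Relation.church_rosser hcr hv hv'
    rw [normal_stuck hn hd1, normal_stuck hn' hd2]
  · have hset : {z : FreeAlgebra k (Ar K) | ∃ (i : ℕ) (h : i + 1 < K),
        z = mono K k [Ar.x 1, Ar.y ⟨i, by omega⟩] - mono K k [Ar.x 0, Ar.y ⟨i + 1, h⟩] ∨
        z = mono K k [Ar.y ⟨i + 1, h⟩, Ar.x 0] - mono K k [Ar.y ⟨i, by omega⟩, Ar.x 1]} =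
        {z : FreeAlgebra k (Ar K) | ∃ p ∈ redSys K, z = mono K k p.1 - mono K k p.2} := by
      ext z
      simp only [Set.mem_setOf_eq]
      constructor
      · rintro ⟨i, h, hz | hz⟩
        · exact ⟨([Ar.x 1, Ar.y ⟨i, by omega⟩], [Ar.x 0, Ar.y ⟨i + 1, h⟩]),
            ⟨i, h, Or.inl rfl⟩, hz⟩
        · exact ⟨([Ar.y ⟨i + 1, h⟩, Ar.x 0], [Ar.y ⟨i, by omega⟩, Ar.x 1]),
            ⟨i, h, Or.inr rfl⟩, hz⟩
      · rintro ⟨⟨s, t⟩, ⟨i, h, hp | hp⟩, rfl⟩ <;>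
          (simp only [Prod.mk.injEq] at hp; obtain ⟨rfl, rfl⟩ := hp)
        · exact ⟨i, h, Or.inl rfl⟩
        · exact ⟨i, h, Or.inr rfl⟩
    rw [hset]
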